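/- arXiv:2209.03775 — 6 statements merged into one kernel-verified Lean document; each statement's English description precedes it below -/
import Mathlib

section
/- For all integers n and p with n ≥ p ≥ 2, the number of permutations π of {1,…,n} that have exactly n−p+1 left-to-right minima and satisfy π(n) ≠ 1 equals (n−1)·c(n−1, n−p+1). -/
/-!
Recording the last value `v = π(n)` and standardising the remaining entries is a bijection
between permutations of `{1, …, n}` and pairs `(v, σ)` with `σ` a permutation of `{1, …, n-1}`.
Standardising is order preserving, so the first `n - 1` positions keep their left-to-right
minima, and position `n` is one more exactly when `v = 1` (`0 : Fin n`, as values are 0-indexed).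
Hence each of the `n - 1` values `v ≠ 1` contributes the permutations of size `n - 1` with the
same number of minima, and the same decomposition gives the Stirling recurrence for the number
of permutations of size `n` with `k` left-to-right minima.
-/

/-- The signless Stirling number of the first kind `c(n, k)`: the number of permutations
of `{1, …, n}` with exactly `k` cycles (`c(n, k) = 0` for `k > n`). -/
def stirlingC : ℕ → ℕ → ℕ
  | 0, 0 => 1
  | 0, _ + 1 => 0
  | _ + 1, 0 => 0
  | n + 1, k + 1 => n * stirlingC n (k + 1) + stirlingC n k

open Finset Equiv

section LeftToRightMinima

variable {α β : Type*} [LinearOrder α] [LinearOrder β] {n : ℕ}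

def leftToRightMinima (f : Fin n → α) : Finset (Fin n) :=
  {i | ∀ j, j < i → f i < f j}

theorem leftToRightMinima_comp_of_strictMono {g : α → β} (hg : StrictMono g) (f : Fin n → α) :
    leftToRightMinima (g ∘ f) = leftToRightMinima f := by
  simp only [leftToRightMinima, Function.comp_apply, hg.lt_iff_lt]

theorem card_leftToRightMinima_snoc (f : Fin n → α) (a : α) :
    #(leftToRightMinima (Fin.snoc f a : Fin (n + 1) → α))
      = #(leftToRightMinima f) + if ∀ i, a < f i then 1 else 0 := by
  simp only [leftToRightMinima, card_filter, Fin.sum_univ_castSucc, Fin.forall_fin_succ',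
    Fin.snoc_castSucc, Fin.snoc_last, Fin.castSucc_lt_castSucc_iff, Fin.castSucc_lt_last,
    (Fin.castSucc_lt_last _).not_gt, lt_irrefl, not_false_eq_true, false_imp_iff, forall_const,
    imp_false, and_true]

end LeftToRightMinima

section InsertLast

variable {n : ℕ}

def insertLast (v : Fin (n + 1)) (σ : Perm (Fin n)) : Perm (Fin (n + 1)) :=
  (finSuccEquiv' (Fin.last n)).trans (σ.optionCongr.trans (finSuccEquiv' v).symm)

theorem coe_insertLast (v : Fin (n + 1)) (σ : Perm (Fin n)) :
    ⇑(insertLast v σ) = Fin.snoc (v.succAbove ∘ σ) v := by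
  ext i
  induction i using Fin.lastCases <;>
    simp [insertLast, finSuccEquiv'_at, finSuccEquiv'_below, Fin.castSucc_lt_last]

@[simp] theorem insertLast_apply_last (v : Fin (n + 1)) (σ : Perm (Fin n)) :
    insertLast v σ (Fin.last n) = v := by
  simp [coe_insertLast]

theorem forall_lt_succAbove_iff_eq_zero (v : Fin (n + 1)) :
    (∀ i : Fin n, v < v.succAbove i) ↔ v = 0 := by
  constructor
  · intro h
    by_contra hv
    have : NeZero n := ⟨by rintro rfl; exact hv (Fin.fin_one_eq_zero v)⟩
    simpa [Fin.succAbove_ne_zero_zero hv] using h 0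
  · rintro rfl i
    exact Fin.succ_pos i

theorem card_leftToRightMinima_insertLast (v : Fin (n + 1)) (σ : Perm (Fin n)) :
    #(leftToRightMinima (insertLast v σ)) = #(leftToRightMinima σ) + if v = 0 then 1 else 0 := by
  rw [coe_insertLast, card_leftToRightMinima_snoc,
    leftToRightMinima_comp_of_strictMono (Fin.strictMono_succAbove v)]
  have hlast : (∀ i, v < v.succAbove (σ i)) ↔ v = 0 :=
    σ.surjective.forall.symm.trans (forall_lt_succAbove_iff_eq_zero v)
  simp only [Function.comp_apply, hlast]

theorem insertLast_uncurry_injective :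
    Function.Injective fun x : Fin (n + 1) × Perm (Fin n) => insertLast x.1 x.2 := by
  rintro ⟨v, σ⟩ ⟨w, τ⟩ h
  have hval (i) : insertLast v σ i = insertLast w τ i := DFunLike.congr_fun h i
  have hvw : v = w := by simpa [coe_insertLast] using hval (Fin.last n)
  subst hvw
  refine Prod.ext rfl (Equiv.ext fun i => Fin.succAbove_right_injective (p := v) ?_)
  simpa [coe_insertLast] using hval i.castSucc

noncomputable def insertLastEquiv (n : ℕ) : Fin (n + 1) × Perm (Fin n) ≃ Perm (Fin (n + 1)) :=
  Equiv.ofBijective _ ((Fintype.bijective_iff_injective_and_card _).2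
    ⟨insertLast_uncurry_injective, by simp [Fintype.card_perm, Nat.factorial_succ]⟩)

@[simp] theorem insertLastEquiv_apply (x : Fin (n + 1) × Perm (Fin n)) :
    insertLastEquiv n x = insertLast x.1 x.2 := rfl

end InsertLast

theorem card_leftToRightMinima_last_ne_zero (n k : ℕ) :
    #{π : Perm (Fin (n + 1)) | #(leftToRightMinima π) = k ∧ π (Fin.last n) ≠ 0}
      = n * #{σ : Perm (Fin n) | #(leftToRightMinima σ) = k} := by
  calc _ = #((univ.erase 0 : Finset (Fin (n + 1))) ×ˢ
            ({σ | #(leftToRightMinima σ) = k} : Finset (Perm (Fin n)))) :=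
        (card_equiv (insertLastEquiv n) fun x => by
          rw [mem_product]
          by_cases hx : x.1 = 0 <;> simp [hx, card_leftToRightMinima_insertLast]).symm
    _ = _ := by rw [card_product, card_erase_of_mem (mem_univ _), card_univ, Fintype.card_fin,
        Nat.add_sub_cancel]

theorem card_leftToRightMinima_last_eq_zero (n k : ℕ) :
    #{π : Perm (Fin (n + 1)) | #(leftToRightMinima π) = k ∧ π (Fin.last n) = 0}
      = #{σ : Perm (Fin n) | #(leftToRightMinima σ) + 1 = k} := by
  calc _ = #(({0} : Finset (Fin (n + 1))) ×ˢ
            ({σ | #(leftToRightMinima σ) + 1 = k} : Finset (Perm (Fin n)))) :=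
        (card_equiv (insertLastEquiv n) fun x => by
          rw [mem_product]
          by_cases hx : x.1 = 0 <;> simp [hx, card_leftToRightMinima_insertLast]).symm
    _ = _ := by rw [card_product, card_singleton, one_mul]

theorem card_leftToRightMinima_succ (n k : ℕ) :
    #{π : Perm (Fin (n + 1)) | #(leftToRightMinima π) = k}
      = n * #{σ : Perm (Fin n) | #(leftToRightMinima σ) = k}
        + #{σ : Perm (Fin n) | #(leftToRightMinima σ) + 1 = k} := by
  rw [← card_filter_add_card_filter_not (fun π : Perm (Fin (n + 1)) => π (Fin.last n) = 0),
    filter_filter, filter_filter, card_leftToRightMinima_last_eq_zero,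
    card_leftToRightMinima_last_ne_zero, add_comm]

theorem card_leftToRightMinima_eq_stirlingC (n k : ℕ) :
    #{π : Perm (Fin n) | #(leftToRightMinima π) = k} = stirlingC n k := by
  induction n generalizing k with
  | zero => cases k <;> simp [leftToRightMinima, stirlingC]
  | succ n ih =>
    rw [card_leftToRightMinima_succ, ih]
    cases k with
    | zero => cases n <;> simp [stirlingC]
    | succ k => simp [stirlingC, ih]

/-- For `n ≥ p ≥ 2`, the number of permutations `π` of `{1, …, n}` having exactly
`n − p + 1` left-to-right minima and with `π(n) ≠ 1` equals `(n − 1)·c(n − 1, n − p + 1)`. -/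
theorem count_complete_games (n p : ℕ) (hp : 2 ≤ p) (hpn : p ≤ n) :
    {π : Equiv.Perm (Fin n) |
        (Finset.univ.filter fun i : Fin n => ∀ j, j < i → π i < π j).card = n - p + 1 ∧
        π ⟨n - 1, by omega⟩ ≠ ⟨0, by omega⟩}.ncard
      = (n - 1) * stirlingC (n - 1) (n - p + 1) := by
  obtain ⟨m, rfl⟩ : ∃ m, n = m + 1 := ⟨n - 1, by omega⟩
  have hlast : (⟨m + 1 - 1, by omega⟩ : Fin (m + 1)) = Fin.last m := rfl
  have hzero : (⟨0, by omega⟩ : Fin (m + 1)) = 0 := rfl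
  rw [← coe_filter_univ, hlast, hzero, Set.ncard_coe_finset, Nat.add_sub_cancel,
    ← card_leftToRightMinima_eq_stirlingC]
  exact card_leftToRightMinima_last_ne_zero m _
end

section
/- For all integers p ≥ 2 and n ≥ 1, Q_{n,p}(1) = (n−1)·c(n−1, n+1−p)/n!. -/
open MeasureTheory intervalIntegral

/-- `Q n p x` : probability that a dart game with `p` remaining players, where the
probability of beating the best throw so far is `x`, ends after exactly `n` further throws. -/
noncomputable def Q : ℕ → ℕ → ℝ → ℝ
  | 0, p, _ => if p = 1 then 1 else 0
  | n + 1, p, x =>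
      if p ≤ 1 then 0
      else (1 - x) * Q n (p - 1) x + ∫ v in (0:ℝ)..x, Q n p v

/-!
Since `Q_{n+1,p}(1) = ∫₀¹ Q_{n,p}`, we track the moments `μ_k(f) = ∫₀¹ (1 - x)ᵏ f(x) dx`.
Integration by parts gives `μ_k(∫₀ˣ f) = μ_{k+1}(f) / (k + 1)`, so the recursion for `Q`
becomes `μ_k(Q_{n+1,p}) = μ_{k+1}(Q_{n,p-1}) + μ_{k+1}(Q_{n,p}) / (k + 1)`. On the
generating polynomial `∑_r μ_k(Q_{n+1,n+2-r}) Xʳ` one step of the recursion is multiplication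
by `1 + X / (k + 1)`, so starting from `μ_k(Q_{1,2}) = 1 / (k + 2)` one gets
`∏_{j<n} (1 + X / (k + j + 1)) / (k + n + 2)`. For `k = 0` this is the rising factorial
`(X + 1) ⋯ (X + n)` divided by `(n + 2) n!`, and the coefficients of rising factorials are
the Stirling numbers of the first kind.
-/

open Polynomial Finset
open scoped Nat

lemma Q_succ_of_le_one (n : ℕ) {p : ℕ} (hp : p ≤ 1) (x : ℝ) : Q (n + 1) p x = 0 := by
  simp [Q, hp]

lemma Q_succ_of_two_le (n : ℕ) {p : ℕ} (hp : 2 ≤ p) (x : ℝ) :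
    Q (n + 1) p x = (1 - x) * Q n (p - 1) x + ∫ v in (0:ℝ)..x, Q n p v := by
  simp [Q, show ¬ p ≤ 1 by omega]

lemma Q_eq_zero_of_lt (n : ℕ) {p : ℕ} (hp : n + 1 < p) (x : ℝ) : Q n p x = 0 := by
  induction n generalizing p x with
  | zero => simp [Q, show p ≠ 1 by omega]
  | succ n ih =>
    simp [Q_succ_of_two_le n (show 2 ≤ p by omega), ih (show n + 1 < p - 1 by omega),
      ih (show n + 1 < p by omega)]

@[fun_prop]
lemma continuous_Q (n p : ℕ) : Continuous (Q n p) := by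
  induction n generalizing p with
  | zero => exact continuous_const
  | succ n ih =>
    rcases le_or_gt p 1 with hp | hp
    · simp only [funext (Q_succ_of_le_one n hp)]
      exact continuous_const
    · simp only [funext (Q_succ_of_two_le n (show 2 ≤ p by omega))]
      exact ((continuous_const.sub continuous_id).mul (ih _)).add
        (continuous_primitive (fun a b => (ih p).intervalIntegrable a b) 0)

noncomputable def moment (k : ℕ) (f : ℝ → ℝ) : ℝ := ∫ x in (0:ℝ)..1, (1 - x) ^ k * f x

lemma moment_one_sub (k : ℕ) : moment k (fun x => 1 - x) = (k + 2 : ℝ)⁻¹ := by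
  simp only [moment, ← pow_succ]
  rw [integral_comp_sub_left (fun x => x ^ (k + 1)), integral_pow]
  push_cast
  ring

lemma moment_primitive {f : ℝ → ℝ} (hf : Continuous f) (k : ℕ) :
    moment k (fun x => ∫ v in (0:ℝ)..x, f v) = (k + 1 : ℝ)⁻¹ * moment (k + 1) f := by
  have hv (x : ℝ) : HasDerivAt (fun x => -(1 - x) ^ (k + 1) / (k + 1 : ℝ)) ((1 - x) ^ k) x := by
    refine ((((hasDerivAt_id x).const_sub 1).pow (k + 1)).neg.div_const _).congr_deriv ?_
    field_simp
    simp
  have hparts := integral_mul_deriv_eq_deriv_mul (a := 0) (b := 1)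
    (fun x _ => (hf.integral_hasStrictDerivAt 0 x).hasDerivAt) (fun x _ => hv x)
    (hf.intervalIntegrable 0 1) (by apply Continuous.intervalIntegrable; fun_prop)
  simp only [moment, mul_comm ((1 - _ : ℝ) ^ k)]
  rw [hparts, sub_self, zero_pow k.succ_ne_zero, neg_zero, zero_div, mul_zero, integral_same,
    zero_mul, sub_zero, zero_sub, ← intervalIntegral.integral_neg,
    ← intervalIntegral.integral_const_mul]
  congr 1
  ext x
  ring

lemma moment_Q_succ (n k : ℕ) {p : ℕ} (hp : 2 ≤ p) :
    moment k (Q (n + 1) p) =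
      moment (k + 1) (Q n (p - 1)) + (k + 1 : ℝ)⁻¹ * moment (k + 1) (Q n p) := by
  have hprim : Continuous fun x => ∫ v in (0:ℝ)..x, Q n p v :=
    continuous_primitive (fun a b => (continuous_Q n p).intervalIntegrable a b) 0
  rw [← moment_primitive (continuous_Q n p)]
  simp only [moment, Q_succ_of_two_le n hp, mul_add, ← mul_assoc, ← pow_succ]
  exact integral_add (by apply Continuous.intervalIntegrable; fun_prop)
    (by apply Continuous.intervalIntegrable; fun_prop)

lemma moment_Q_succ_succ (n k p : ℕ) :
    moment k (Q (n + 2) p) =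
      moment (k + 1) (Q (n + 1) (p - 1)) + (k + 1 : ℝ)⁻¹ * moment (k + 1) (Q (n + 1) p) := by
  rcases le_or_gt p 1 with hp | hp
  · simp [moment, Q_succ_of_le_one _ hp, Q_succ_of_le_one _ (show p - 1 ≤ 1 by omega)]
  · exact moment_Q_succ (n + 1) k hp

noncomputable def momentPoly (k n : ℕ) : ℝ[X] :=
  C ((k + n + 2 : ℝ)⁻¹) * ∏ j ∈ range n, (1 + C ((k + j + 1 : ℝ)⁻¹) * X)

lemma momentPoly_succ (k n : ℕ) :
    momentPoly k (n + 1) = (1 + C ((k + 1 : ℝ)⁻¹) * X) * momentPoly (k + 1) n := by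
  have hc : (k + (n + 1) + 2 : ℝ) = k + 1 + n + 2 := by ring
  have hf (j : ℕ) : (k + (j + 1) + 1 : ℝ) = k + 1 + j + 1 := by ring
  simp only [momentPoly, prod_range_succ', Nat.cast_add, Nat.cast_one, Nat.cast_zero, add_zero,
    hc, hf]
  ring

-- For `r > n + 1` the index `n + 2 - r` truncates to `0`, and `Q (n + 1) 0 = 0`.
lemma moment_Q_eq_coeff (n k r : ℕ) :
    moment k (Q (n + 1) (n + 2 - r)) = (momentPoly k n).coeff r := by
  induction n generalizing k r with
  | zero =>
    rcases r with _ | r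
    · have h : Q 1 2 = fun x => 1 - x := by
        ext x
        simp [Q]
      simp [h, moment_one_sub, momentPoly]
    · rw [funext (Q_succ_of_le_one 0 (show 2 - (r + 1) ≤ 1 by omega))]
      simp [moment, momentPoly]
  | succ n ih =>
    rw [momentPoly_succ, moment_Q_succ_succ, add_mul, one_mul, mul_assoc, coeff_add, coeff_C_mul]
    rcases r with _ | r
    · rw [funext (Q_eq_zero_of_lt (n + 1) (show n + 1 + 1 < n + 1 + 2 - 0 by omega))]
      simp [← ih, moment]
    · rw [coeff_X_mul, ← ih, ← ih, show n + 1 + 2 - (r + 1) - 1 = n + 2 - (r + 1) by omega,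
        show n + 1 + 2 - (r + 1) = n + 2 - r by omega]

lemma coeff_ascPochhammer {S : Type*} [Semiring S] (m r : ℕ) :
    (ascPochhammer S m).coeff r = stirlingC m r := by
  induction m generalizing r with
  | zero => cases r <;> simp [stirlingC, coeff_one]
  | succ m ih =>
    rw [ascPochhammer_succ_right, mul_add, coeff_add, coeff_mul_natCast, ih]
    rcases r with _ | r
    · cases m <;> simp [stirlingC]
    · rw [coeff_mul_X, ih, stirlingC, Nat.cast_add, Nat.cast_mul, Nat.cast_comm, add_comm]

lemma X_mul_prod_one_add_inv_mul_X (m : ℕ) :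
    X * ∏ j ∈ range m, (1 + C ((j + 1 : ℝ)⁻¹) * X) =
      C ((m ! : ℝ)⁻¹) * ascPochhammer ℝ (m + 1) := by
  induction m with
  | zero => simp
  | succ m ih =>
    have hinv : C ((m + 1 : ℝ)⁻¹) * C (m + 1 : ℝ) = 1 := by
      rw [← C_mul, inv_mul_cancel₀ (by positivity), C_1]
    have hfact : C ((m ! : ℝ)⁻¹) = C (((m + 1) ! : ℝ)⁻¹) * C (m + 1 : ℝ) := by
      rw [← C_mul, Nat.factorial_succ]
      push_cast
      field_simp
    rw [prod_range_succ, ← mul_assoc, ih, ascPochhammer_succ_right (S := ℝ) (m + 1), hfact,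
      show ((m + 1 : ℕ) : ℝ[X]) = C (m + 1 : ℝ) by simp]
    linear_combination (C (((m + 1) ! : ℝ)⁻¹) * ascPochhammer ℝ (m + 1) * X) * hinv

lemma coeff_momentPoly_zero (m r : ℕ) :
    (momentPoly 0 m).coeff r = stirlingC (m + 1) (r + 1) / ((m + 2) * m ! : ℝ) := by
  have h := congrArg (coeff · (r + 1)) (X_mul_prod_one_add_inv_mul_X m)
  simp only [coeff_X_mul, coeff_C_mul, coeff_ascPochhammer] at h
  simp only [momentPoly, CharP.cast_eq_zero, zero_add, coeff_C_mul, h]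
  field_simp

lemma moment_zero_Q (m : ℕ) {p : ℕ} (hp : p ≤ m + 2) :
    moment 0 (Q (m + 1) p) = stirlingC (m + 1) (m + 3 - p) / ((m + 2) * m ! : ℝ) := by
  have h := moment_Q_eq_coeff m 0 (m + 2 - p)
  rw [Nat.sub_sub_self hp] at h
  rw [h, coeff_momentPoly_zero, show m + 2 - p + 1 = m + 3 - p by omega]

/-- For `p ≥ 2` and `n ≥ 1`, `Q_{n,p}(1) = (n − 1)·c(n − 1, n + 1 − p)/n!`. -/
theorem Q_one_eq (n p : ℕ) (hp : 2 ≤ p) (hn : 1 ≤ n) :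
    Q n p 1 = (((n - 1) * stirlingC (n - 1) (n + 1 - p) : ℕ) : ℝ) / (Nat.factorial n : ℝ) := by
  obtain ⟨n, rfl⟩ := Nat.exists_eq_add_of_le' hn
  have hQ_one : Q (n + 1) p 1 = moment 0 (Q n p) := by simp [Q_succ_of_two_le n hp, moment]
  rw [hQ_one]
  rcases n with _ | m
  · simp [moment, Q, show p ≠ 1 by omega]
  rcases le_or_gt p (m + 2) with hpm | hpm
  · rw [moment_zero_Q m hpm, show m + 1 + 1 + 1 - p = m + 3 - p by omega, Nat.factorial_succ,
      Nat.factorial_succ]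
    push_cast
    field_simp
    ring
  · rw [funext (Q_eq_zero_of_lt (m + 1) (show m + 1 + 1 < p by omega)),
      show m + 1 + 1 + 1 - p = 0 by omega]
    simp [moment, stirlingC]
end

section
/- For all integers n ≥ 0 and p ≥ 1 and for every real x, ∑_{k=1}^{p} R_{n,p,k}(x) = Q_{n,p}(x). -/
open MeasureTheory intervalIntegral

/-- `R n p k x` : probability that, in a dart game with `p` remaining players where the
probability of beating the best throw so far is `x`, the `k`-th player in throwing order
wins after exactly `n` further throws. -/
noncomputable def R : ℕ → ℕ → ℕ → ℝ → ℝ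
  | 0, p, k, _ => if p = 1 ∧ k = 1 then 1 else 0
  | n + 1, p, k, x =>
      if p ≤ 1 then 0
      else if k = 1 then ∫ v in (0:ℝ)..x, R n p p v
      else (1 - x) * R n (p - 1) (k - 1) x + ∫ v in (0:ℝ)..x, R n p (k - 1) v

/-! Summing the recursion for `R` over `k` reproduces the recursion for `Q`: the term
`∫ R n p p` of player `1` and the integral parts of the other players' terms together give
`∫ ∑ₖ R n p k`, while their `(1 - x)` parts give `(1 - x) ∑ₖ R n (p - 1) k`. Induction on `n`
then identifies the sum with `Q`. -/

open Finset

theorem Finset.sum_Icc_add_one_eq_add_sum_succ {M : Type*} [AddCommMonoid M] (f : ℕ → M)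
    {a b : ℕ} (h : a ≤ b + 1) :
    ∑ k ∈ Icc a (b + 1), f k = f a + ∑ k ∈ Icc a b, f (k + 1) := by
  rw [← sum_Ioc_add_eq_sum_Icc h, ← Icc_add_one_left_eq_Ioc, ← map_add_right_Icc, sum_map,
    add_comm]
  rfl

theorem continuous_R (n p k : ℕ) : Continuous (R n p k) := by
  induction n generalizing p k with
  | zero => simp only [R]; exact continuous_const
  | succ n ih =>
    have primitive (j : ℕ) : Continuous fun x => ∫ v in (0:ℝ)..x, R n p j v :=
      continuous_primitive (fun a b => (ih p j).intervalIntegrable a b) 0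
    simp only [R]
    split_ifs
    · exact continuous_const
    · exact primitive p
    · exact ((continuous_const.sub continuous_id).mul (ih _ _)).add (primitive _)

theorem sum_R_zero (p : ℕ) (hp : 1 ≤ p) (x : ℝ) :
    ∑ k ∈ Icc 1 p, R 0 p k x = Q 0 p x := by
  rcases hp.eq_or_lt with rfl | hp
  · simp [R, Q]
  · simp [R, Q, hp.ne']

theorem sum_R_succ (n m : ℕ) (hm : 1 ≤ m) (x : ℝ) :
    ∑ k ∈ Icc 1 (m + 1), R (n + 1) (m + 1) k x =
      (1 - x) * ∑ k ∈ Icc 1 m, R n m k x +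
        ∫ v in (0:ℝ)..x, ∑ k ∈ Icc 1 (m + 1), R n (m + 1) k v := by
  have first : R (n + 1) (m + 1) 1 x = ∫ v in (0:ℝ)..x, R n (m + 1) (m + 1) v := by
    rw [R, if_neg (by omega), if_pos rfl]
  have shifted (k : ℕ) (hk : k ∈ Icc 1 m) : R (n + 1) (m + 1) (k + 1) x =
      (1 - x) * R n m k x + ∫ v in (0:ℝ)..x, R n (m + 1) k v := by
    rw [R, if_neg (by omega), if_neg (by simp at hk; omega), Nat.add_sub_cancel,
      Nat.add_sub_cancel]
  rw [sum_Icc_add_one_eq_add_sum_succ _ (by omega), first, sum_congr rfl shifted,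
    sum_add_distrib, ← mul_sum,
    integral_finsetSum fun k _ => (continuous_R n _ k).intervalIntegrable 0 x,
    sum_Icc_succ_top (by omega)]
  ring

/-- For all `n ≥ 0`, `p ≥ 1` and every real `x`,
`∑_{k=1}^{p} R_{n,p,k}(x) = Q_{n,p}(x)`. -/
theorem sum_R_eq_Q (n p : ℕ) (hp : 1 ≤ p) (x : ℝ) :
    ∑ k ∈ Finset.Icc 1 p, R n p k x = Q n p x := by
  induction n generalizing p x with
  | zero => exact sum_R_zero p hp x
  | succ n ih =>
    obtain ⟨m, rfl⟩ : ∃ m, p = m + 1 := ⟨p - 1, by omega⟩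
    rcases m.eq_zero_or_pos with rfl | hm
    · simp [R, Q]
    · rw [sum_R_succ n m hm, ih m hm, Q, if_neg (by omega), Nat.add_sub_cancel]
      simp only [ih _ hp]
end

section
/- For every x ∈ [0,1] and every real z: ∑_{n≥0} R_{n,2,1}(x)·z^n = 1 + ((z−1)/2)·e^{xz} − ((z+1)/2)·e^{−xz}, and ∑_{n≥0} R_{n,2,2}(x)·z^n = ((z−1)/2)·e^{xz} + ((z+1)/2)·e^{−xz} (in particular both series converge). -/
open MeasureTheory intervalIntegral

/-!
With two players the recursion reads `R_{1,2,1} = 0`, `R_{1,2,2} = 1 - x` and, for `n ≥ 1`,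
`R_{n+1,2,1} = ∫₀ˣ R_{n,2,2}`, `R_{n+1,2,2} = ∫₀ˣ R_{n,2,1}`. Since `1 - x` integrates to
`x - x²/2!`, and in general `x^n/n! - x^(n+1)/(n+1)!` to the next such difference, the game
ends at throw `n+1` with probability `x^n/n! - x^(n+1)/(n+1)!`, won by player 2 for `n` even
and by player 1 for `n` odd. The generating functions of players 1 and 2 are thus the even
and odd parts in `z` of `∑ (x^n/n! - x^(n+1)/(n+1)!) z^(n+1) = (z - 1) e^(xz) + 1`.
-/

lemma R_zero_of_ne_one {p : ℕ} (hp : p ≠ 1) (k : ℕ) (x : ℝ) : R 0 p k x = 0 := by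
  simp [R, hp]

lemma R_one_one (n : ℕ) (x : ℝ) : R n 1 1 x = if n = 0 then 1 else 0 := by
  cases n <;> simp [R]

lemma R_succ_first {p : ℕ} (hp : 2 ≤ p) (n : ℕ) (x : ℝ) :
    R (n + 1) p 1 x = ∫ v in (0:ℝ)..x, R n p p v := by
  simp [R, show ¬p ≤ 1 by omega]

lemma R_succ_succ {p : ℕ} (hp : 2 ≤ p) (n k : ℕ) (x : ℝ) :
    R (n + 1) p (k + 2) x =
      (1 - x) * R n (p - 1) (k + 1) x + ∫ v in (0:ℝ)..x, R n p (k + 1) v := by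
  simp [R, show ¬p ≤ 1 by omega]

noncomputable def expTermDiff (n : ℕ) (x : ℝ) : ℝ :=
  x ^ n / n.factorial - x ^ (n + 1) / (n + 1).factorial

lemma integral_expTermDiff (n : ℕ) (x : ℝ) :
    ∫ v in (0:ℝ)..x, expTermDiff n v = expTermDiff (n + 1) x := by
  have hint : ∀ m : ℕ, IntervalIntegrable (fun v : ℝ => v ^ m / m.factorial) volume 0 x :=
    fun m => ((continuous_pow m).div_const _).intervalIntegrable 0 x
  simp only [expTermDiff]
  rw [integral_sub (hint n) (hint (n + 1)), intervalIntegral.integral_div,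
    intervalIntegral.integral_div, integral_pow, integral_pow]
  push_cast [Nat.factorial_succ]
  field_simp
  ring

lemma hasSum_expTermDiff_mul_pow (x z : ℝ) :
    HasSum (fun n => expTermDiff n x * z ^ (n + 1)) ((z - 1) * Real.exp (x * z) + 1) := by
  have hexp : HasSum (fun n : ℕ => (x * z) ^ n / n.factorial) (Real.exp (x * z)) := by
    rw [Real.exp_eq_exp_ℝ]
    exact NormedSpace.expSeries_div_hasSum_exp (x * z)
  have hexp_tail : HasSum (fun n : ℕ => (x * z) ^ (n + 1) / (n + 1).factorial)
      (Real.exp (x * z) - 1) := by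
    simpa using (hasSum_nat_add_iff' 1).2 hexp
  rw [show (z - 1) * Real.exp (x * z) + 1 = z * Real.exp (x * z) - (Real.exp (x * z) - 1) by
    ring]
  refine ((hexp.mul_left z).sub hexp_tail).congr_fun fun n => ?_
  simp only [expTermDiff]
  ring

lemma R_succ_two (n : ℕ) (x : ℝ) :
    R (n + 1) 2 1 x = (1 + (-1) ^ (n + 1)) / 2 * expTermDiff n x ∧
    R (n + 1) 2 2 x = (1 - (-1) ^ (n + 1)) / 2 * expTermDiff n x := by
  induction n generalizing x with
  | zero =>
    simp [R_succ_first, R_succ_succ, R_zero_of_ne_one, R_one_one, expTermDiff]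
  | succ n ih =>
    constructor
    · rw [R_succ_first le_rfl, integral_congr fun v _ => (ih v).2,
        intervalIntegral.integral_const_mul, integral_expTermDiff]
      ring
    · rw [R_succ_succ le_rfl, R_one_one, if_neg n.succ_ne_zero,
        integral_congr fun v _ => (ih v).1, intervalIntegral.integral_const_mul,
        integral_expTermDiff]
      ring

lemma hasSum_R_two_succ_mul_pow (x z : ℝ) :
    HasSum (fun n => R (n + 1) 2 1 x * z ^ (n + 1))
      (1 + (z - 1) / 2 * Real.exp (x * z) - (z + 1) / 2 * Real.exp (-(x * z))) ∧
    HasSum (fun n => R (n + 1) 2 2 x * z ^ (n + 1))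
      ((z - 1) / 2 * Real.exp (x * z) + (z + 1) / 2 * Real.exp (-(x * z))) := by
  have hpos := hasSum_expTermDiff_mul_pow x z
  have hneg := hasSum_expTermDiff_mul_pow x (-z)
  rw [mul_neg] at hneg
  constructor
  · rw [show 1 + (z - 1) / 2 * Real.exp (x * z) - (z + 1) / 2 * Real.exp (-(x * z)) =
      ((z - 1) * Real.exp (x * z) + 1 + ((-z - 1) * Real.exp (-(x * z)) + 1)) / 2 by ring]
    refine ((hpos.add hneg).div_const 2).congr_fun fun n => ?_
    rw [(R_succ_two n x).1, neg_pow]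
    ring
  · rw [show (z - 1) / 2 * Real.exp (x * z) + (z + 1) / 2 * Real.exp (-(x * z)) =
      ((z - 1) * Real.exp (x * z) + 1 - ((-z - 1) * Real.exp (-(x * z)) + 1)) / 2 by ring]
    refine ((hpos.sub hneg).div_const 2).congr_fun fun n => ?_
    rw [(R_succ_two n x).2, neg_pow]
    ring

theorem Rgen_two_players_general (x : ℝ) (z : ℝ) :
    HasSum (fun n : ℕ => R n 2 1 x * z ^ n)
      (1 + (z - 1) / 2 * Real.exp (x * z) - (z + 1) / 2 * Real.exp (-(x * z))) ∧
    HasSum (fun n : ℕ => R n 2 2 x * z ^ n)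
      ((z - 1) / 2 * Real.exp (x * z) + (z + 1) / 2 * Real.exp (-(x * z))) := by
  obtain ⟨h1, h2⟩ := hasSum_R_two_succ_mul_pow x z
  exact ⟨(hasSum_nat_add_iff' 1).1 (by simpa [R_zero_of_ne_one] using h1),
    (hasSum_nat_add_iff' 1).1 (by simpa [R_zero_of_ne_one] using h2)⟩

/-- For the 2-player game, `x ∈ [0,1]` and every real `z`:
`∑_{n≥0} R_{n,2,1}(x)·z^n = 1 + ((z−1)/2)·e^{xz} − ((z+1)/2)·e^{−xz}` and
`∑_{n≥0} R_{n,2,2}(x)·z^n = ((z−1)/2)·e^{xz} + ((z+1)/2)·e^{−xz}`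
(in particular both series converge). -/
theorem Rgen_two_players (x : ℝ) (hx : x ∈ Set.Icc (0:ℝ) 1) (z : ℝ) :
    HasSum (fun n : ℕ => R n 2 1 x * z ^ n)
      (1 + (z - 1) / 2 * Real.exp (x * z) - (z + 1) / 2 * Real.exp (-(x * z))) ∧
    HasSum (fun n : ℕ => R n 2 2 x * z ^ n)
      ((z - 1) / 2 * Real.exp (x * z) + (z + 1) / 2 * Real.exp (-(x * z))) :=
  Rgen_two_players_general x z
end

section
/- For every x ∈ [0,1]: P_{3,1}(x) = 1 + (x−1)·e^{−x} − (2/√3)·e^{−x/2}·sin(√3·x/2); P_{3,2}(x) = −e^{−x} + e^{−x/2}·((1/√3)·sin(√3·x/2) + cos(√3·x/2)); and P_{3,3}(x) = (2−x)·e^{−x} + e^{−x/2}·((1/√3)·sin(√3·x/2) − cos(√3·x/2)). In particular, P_{3,1} = 1 − (2/√(3e))·sin(√3/2). -/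
open MeasureTheory intervalIntegral

/-- `P p k x = ∑_{n≥0} R_{n,p,k}(x)` : the probability that, when `p` players remain and
the probability of beating the best throw so far is `x`, the `k`-th player in throwing
order wins the game. -/
noncomputable def P (p k : ℕ) (x : ℝ) : ℝ := ∑' n : ℕ, R n p k x

/-!
Each `R n 2 k` is a multiple of `x^(n-1)/(n-1)! - x^n/n!` and each `R n 3 k` a combination of
`x^(n-2)/(n-2)!`, `x^(n-1)/(n-1)!` and `x^n/n!`, with coefficients obeying a first-order
recursion in `n` (integration shifts the monomials, and `(1 - x)` only mixes neighbours).
Regrouping the series by powers of `x` gives `P_{3,k}(x) = ∑ c_k(j) x^j/j!`, where `c_k(j)` is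
`(-1)^j` times a polynomial of degree at most one in `j`, plus a 3-periodic term. The periodic
part is a combination of the real and imaginary parts of `ω^j` for `ω = e^{2πi/3}`, so the series
sums to a combination of `e^{-x}`, `x e^{-x}` and the real and imaginary parts of `e^{ωx}`.
-/

noncomputable def expTerm (j : ℕ) (x : ℝ) : ℝ := x ^ j / j.factorial

lemma intervalIntegrable_expTerm (j : ℕ) (a b : ℝ) :
    IntervalIntegrable (expTerm j) volume a b :=
  ((continuous_pow j).div_const _).intervalIntegrable a b

lemma integral_expTerm (j : ℕ) (x : ℝ) :
    ∫ v in (0:ℝ)..x, expTerm j v = expTerm (j + 1) x := by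
  simp only [expTerm, intervalIntegral.integral_div, integral_pow, Nat.factorial_succ]
  push_cast
  field_simp
  ring

lemma mul_expTerm (j : ℕ) (x : ℝ) : x * expTerm j x = (j + 1) * expTerm (j + 1) x := by
  simp only [expTerm, Nat.factorial_succ]
  push_cast
  field_simp
  ring

lemma expTerm_neg (j : ℕ) (x : ℝ) : expTerm j (-x) = (-1) ^ j * expTerm j x := by
  rw [expTerm, expTerm, neg_pow, mul_div_assoc]

lemma hasSum_expTerm (x : ℝ) : HasSum (fun j => expTerm j x) (Real.exp x) := by
  rw [Real.exp_eq_exp_ℝ]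
  exact NormedSpace.expSeries_div_hasSum_exp x

lemma hasSum_natCast_mul_expTerm (x : ℝ) :
    HasSum (fun j : ℕ => (j : ℝ) * expTerm j x) (x * Real.exp x) := by
  rw [← hasSum_nat_add_iff' 1]
  simpa [← mul_expTerm] using (hasSum_expTerm x).mul_left x

lemma hasSum_pow_mul_expTerm (z : ℂ) (x : ℝ) :
    HasSum (fun j => z ^ j * (expTerm j x : ℂ)) (Complex.exp (z * x)) := by
  rw [Complex.exp_eq_exp_ℂ]
  refine (NormedSpace.expSeries_div_hasSum_exp (z * x)).congr_fun fun j => ?_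
  push_cast [expTerm]
  ring

lemma summable_mul_expTerm_of_abs_le {c : ℕ → ℝ} {C : ℝ}
    (hc : ∀ n, |c n| ≤ C * ((n : ℝ) + 1) ^ 2) (x : ℝ) :
    Summable fun n => c n * expTerm n x := by
  refine .of_norm_bounded ((Real.summable_pow_div_factorial (4 * |x|)).mul_left C) fun n => ?_
  have hC : 0 ≤ C := by simpa using (abs_nonneg _).trans (hc 0)
  have h4 : ((n : ℝ) + 1) ^ 2 ≤ 4 ^ n := by
    have : (n : ℝ) + 1 ≤ 2 ^ n := by exact_mod_cast Nat.lt_two_pow_self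
    calc ((n : ℝ) + 1) ^ 2 ≤ (2 ^ n) ^ 2 := by gcongr
      _ = 4 ^ n := by rw [← pow_mul, mul_comm, pow_mul]; norm_num
  rw [norm_mul, Real.norm_eq_abs, Real.norm_eq_abs, expTerm, abs_div, abs_pow, Nat.abs_cast,
    mul_pow, mul_div_assoc, ← mul_assoc]
  gcongr
  exact (hc n).trans (by gcongr)

lemma integral_expTerm_sub (n : ℕ) (x : ℝ) :
    ∫ v in (0:ℝ)..x, (expTerm n v - expTerm (n + 1) v)
      = expTerm (n + 1) x - expTerm (n + 2) x := by
  rw [integral_sub (intervalIntegrable_expTerm _ _ _) (intervalIntegrable_expTerm _ _ _),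
    integral_expTerm, integral_expTerm]

lemma one_sub_mul_expTerm_sub (n : ℕ) (x : ℝ) :
    (1 - x) * (expTerm n x - expTerm (n + 1) x)
      = expTerm n x - (n + 2) * (expTerm (n + 1) x - expTerm (n + 2) x) := by
  have := mul_expTerm (n + 1) x
  push_cast at this
  linear_combination (-1 : ℝ) * mul_expTerm n x + this

lemma R_succ_one {n p : ℕ} (hp : 2 ≤ p) (x : ℝ) :
    R (n + 1) p 1 x = ∫ v in (0:ℝ)..x, R n p p v := by
  rw [R, if_neg (by omega), if_pos rfl]

lemma R_succ_of_ne_one {n p k : ℕ} (hp : 2 ≤ p) (hk : k ≠ 1) (x : ℝ) :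
    R (n + 1) p k x = (1 - x) * R n (p - 1) (k - 1) x + ∫ v in (0:ℝ)..x, R n p (k - 1) v := by
  rw [R, if_neg (by omega), if_neg hk]

/-- `coeffTwo 1 n` is the indicator of even `n ≥ 2`, and `coeffTwo 2 n` that of odd `n`. -/
noncomputable def coeffTwo (k n : ℕ) : ℝ :=
  if k = 1 then (1 + (-1) ^ n) / 2 - (if n = 0 then 1 else 0) else (1 - (-1) ^ n) / 2

lemma abs_coeffTwo_le (k n : ℕ) : |coeffTwo k n| ≤ 1 := by
  unfold coeffTwo
  rcases neg_one_pow_eq_or ℝ n with h | h <;> rw [h] <;> split_ifs <;> norm_num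

lemma R_two_succ (n : ℕ) {k : ℕ} (hk : k = 1 ∨ k = 2) (x : ℝ) :
    R (n + 1) 2 k x = coeffTwo k (n + 1) * (expTerm n x - expTerm (n + 1) x) := by
  induction n generalizing k x with
  | zero => rcases hk with rfl | rfl <;> simp [R, coeffTwo, expTerm]
  | succ n ih =>
    rcases hk with rfl | rfl
    · rw [R_succ_one le_rfl]
      simp only [ih (.inr rfl), intervalIntegral.integral_const_mul, integral_expTerm_sub]
      simp [coeffTwo, pow_succ]
    · rw [R_succ_of_ne_one le_rfl (by norm_num)]
      simp only [ih (.inl rfl), intervalIntegral.integral_const_mul, integral_expTerm_sub]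
      simp [R, coeffTwo, pow_succ, sub_eq_add_neg]

noncomputable def coeffA : ℕ → ℕ → ℝ
  | 0, _ => 0
  | n + 1, k => if k = 1 then coeffA n 3 else coeffA n (k - 1) + coeffTwo (k - 1) n

noncomputable def coeffM : ℕ → ℕ → ℝ
  | 0, _ => 0
  | n + 1, k => if k = 1 then coeffM n 3 else coeffM n (k - 1) + (n + 1) * coeffTwo (k - 1) n

lemma coeffM_zero (k : ℕ) : coeffM 0 k = 0 := rfl

lemma coeffM_one (k : ℕ) : coeffM 1 k = 0 := by
  simp [coeffM, coeffTwo]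

lemma abs_coeffA_le_and_abs_coeffM_le (n k : ℕ) :
    |coeffA n k| ≤ n ∧ |coeffM n k| ≤ n ^ 2 := by
  induction n generalizing k with
  | zero => simp [coeffA, coeffM]
  | succ n ih =>
    simp only [coeffA, coeffM]
    have hn : (0 : ℝ) ≤ n := n.cast_nonneg
    split_ifs
    · push_cast
      exact ⟨(ih 3).1.trans (by linarith), (ih 3).2.trans (by nlinarith)⟩
    · have hτ := abs_coeffTwo_le (k - 1) n
      obtain ⟨hA, hM⟩ := ih (k - 1)
      push_cast
      constructor
      · exact (abs_add_le _ _).trans (by linarith)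
      · refine (abs_add_le _ _).trans ?_
        rw [abs_mul, abs_of_nonneg (by positivity : (0 : ℝ) ≤ n + 1)]
        nlinarith

lemma R_three_add_two (n : ℕ) {k : ℕ} (hk : 1 ≤ k ∧ k ≤ 3) (x : ℝ) :
    R (n + 2) 3 k x = coeffA (n + 2) k * expTerm n x
      - coeffM (n + 2) k * (expTerm (n + 1) x - expTerm (n + 2) x) := by
  induction n generalizing k x with
  | zero =>
    obtain ⟨h1, h3⟩ := hk
    interval_cases k <;> simp [R, coeffA, coeffM, coeffTwo, expTerm]
    ring
  | succ n ih =>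
    have hint : ∀ k, 1 ≤ k ∧ k ≤ 3 → ∫ v in (0:ℝ)..x, R (n + 2) 3 k v
        = coeffA (n + 2) k * expTerm (n + 1) x
          - coeffM (n + 2) k * (expTerm (n + 2) x - expTerm (n + 3) x) := fun k hk => by
      simp only [ih hk]
      rw [integral_sub ((intervalIntegrable_expTerm _ _ _).const_mul _)
          (((intervalIntegrable_expTerm _ _ _).sub (intervalIntegrable_expTerm _ _ _)).const_mul _),
        intervalIntegral.integral_const_mul, intervalIntegral.integral_const_mul,
        integral_expTerm, integral_expTerm_sub]
    rcases eq_or_ne k 1 with rfl | hk1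
    · rw [R_succ_one (by norm_num), hint 3 (by norm_num)]
      simp [coeffA, coeffM]
    · have hk' : k - 1 = 1 ∨ k - 1 = 2 := by omega
      rw [R_succ_of_ne_one (by norm_num) hk1, R_two_succ _ hk', hint (k - 1) (by omega),
        mul_left_comm, one_sub_mul_expTerm_sub]
      simp only [coeffA, coeffM, if_neg hk1]
      push_cast
      ring

noncomputable def coeffThree (k j : ℕ) : ℝ := coeffA (j + 2) k - coeffM (j + 1) k + coeffM j k

lemma P_three_eq_tsum {k : ℕ} (hk : 1 ≤ k ∧ k ≤ 3) (x : ℝ) :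
    P 3 k x = ∑' j, coeffThree k j * expTerm j x := by
  have hbound := abs_coeffA_le_and_abs_coeffM_le
  have hA : Summable fun j => coeffA (j + 2) k * expTerm j x :=
    summable_mul_expTerm_of_abs_le (C := 2)
      (fun n => (hbound _ k).1.trans (by push_cast; nlinarith)) x
  have hM₁ : Summable fun j => coeffM (j + 1) k * expTerm j x :=
    summable_mul_expTerm_of_abs_le (C := 1)
      (fun n => (hbound _ k).2.trans (by push_cast; nlinarith)) x
  have hM₀ : Summable fun j => coeffM j k * expTerm j x :=
    summable_mul_expTerm_of_abs_le (C := 1)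
      (fun n => (hbound _ k).2.trans (by nlinarith [n.cast_nonneg (α := ℝ)])) x
  have hC : HasSum (fun j => coeffThree k j * expTerm j x)
      ((∑' j, coeffA (j + 2) k * expTerm j x) - (∑' j, coeffM (j + 1) k * expTerm j x)
        + ∑' j, coeffM j k * expTerm j x) :=
    ((hA.hasSum.sub hM₁.hasSum).add hM₀.hasSum).congr_fun fun j => by unfold coeffThree; ring
  have hR : HasSum (fun n => R (n + 2) 3 k x) ((∑' j, coeffA (j + 2) k * expTerm j x)
      - (∑' j, coeffM (j + 1) k * expTerm j x) + ∑' j, coeffM j k * expTerm j x) := by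
    have hM₁' := (hasSum_nat_add_iff' 1).2 hM₁.hasSum
    have hM₀' := (hasSum_nat_add_iff' 2).2 hM₀.hasSum
    simp only [Finset.sum_range_succ, Finset.sum_range_zero, coeffM_zero, coeffM_one, zero_mul,
      zero_add, sub_zero] at hM₁' hM₀'
    refine ((hA.hasSum.sub hM₁').add hM₀').congr_fun fun n => ?_
    rw [R_three_add_two n hk]
    ring
  have hR₀₁ : ∑ i ∈ Finset.range 2, R i 3 k x = 0 := by simp [Finset.sum_range_succ, R]
  rw [P, ((hasSum_nat_add_iff' 2).1 (by rwa [hR₀₁, sub_zero])).tsum_eq, hC.tsum_eq]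

lemma coeffThree_one_succ (j : ℕ) : coeffThree 1 (j + 1) = coeffThree 3 j := by
  simp [coeffThree, coeffA, coeffM]

lemma coeffThree_succ_of_ne_one (j : ℕ) {k : ℕ} (hk : k ≠ 1) :
    coeffThree k (j + 1) = coeffThree (k - 1) j + (coeffTwo (k - 1) (j + 2)
      - (j + 2) * coeffTwo (k - 1) (j + 1) + (j + 1) * coeffTwo (k - 1) j) := by
  simp only [coeffThree, coeffA, coeffM, if_neg hk]
  push_cast
  ring

-- The coefficients of `x^(j+1)/(j+1)!` in `(1 - x) P_{2,1}(x) = (1 - x)(1 - e^{-x})` and in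
-- `(1 - x) P_{2,2}(x) = (1 - x) e^{-x}`.
lemma coeffTwo_one_shift (j : ℕ) :
    coeffTwo 1 (j + 2) - (j + 2) * coeffTwo 1 (j + 1) + (j + 1) * coeffTwo 1 j
      = (-1) ^ j * (j + 2) - if j = 0 then 1 else 0 := by
  obtain rfl | hj := eq_or_ne j 0
  · norm_num [coeffTwo]
  · simp only [coeffTwo, if_pos, Nat.add_eq_zero_iff, one_ne_zero, two_ne_zero, and_false,
      hj, if_false, pow_succ]
    ring

lemma coeffTwo_two_shift (j : ℕ) :
    coeffTwo 2 (j + 2) - (j + 2) * coeffTwo 2 (j + 1) + (j + 1) * coeffTwo 2 j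
      = -(-1) ^ j * (j + 2) := by
  simp only [coeffTwo, OfNat.ofNat_ne_one, if_false, pow_succ]
  ring

/-- The primitive cube root of unity `e^{2πi/3}`. -/
noncomputable def ω : ℂ := ⟨-1 / 2, √3 / 2⟩

lemma re_ω_pow_succ (j : ℕ) :
    (ω ^ (j + 1)).re = -(ω ^ j).re / 2 - 3 / 2 * ((ω ^ j).im / √3) := by
  have h3 : √3 ≠ 0 := by positivity
  rw [pow_succ, Complex.mul_re, show ω.re = -1 / 2 from rfl, show ω.im = √3 / 2 from rfl]
  field_simp
  linear_combination -(ω ^ j).im * Real.mul_self_sqrt (show (0 : ℝ) ≤ 3 by norm_num)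

lemma im_ω_pow_succ_div (j : ℕ) :
    (ω ^ (j + 1)).im / √3 = (ω ^ j).re / 2 - (ω ^ j).im / √3 / 2 := by
  have h3 : √3 ≠ 0 := by positivity
  rw [pow_succ, Complex.mul_im, show ω.re = -1 / 2 from rfl, show ω.im = √3 / 2 from rfl]
  field_simp
  ring

lemma coeffThree_eq (j : ℕ) :
    coeffThree 1 j = -(-1) ^ j * (j + 1) + (if j = 0 then 1 else 0) - 2 * ((ω ^ j).im / √3) ∧
    coeffThree 2 j = -(-1) ^ j + (ω ^ j).re + (ω ^ j).im / √3 ∧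
    coeffThree 3 j = (-1) ^ j * (j + 2) + (ω ^ j).im / √3 - (ω ^ j).re := by
  induction j with
  | zero => norm_num [coeffThree, coeffA, coeffM, coeffTwo]
  | succ j ih =>
    obtain ⟨h₁, h₂, h₃⟩ := ih
    refine ⟨?_, ?_, ?_⟩
    · rw [coeffThree_one_succ, h₃, im_ω_pow_succ_div, pow_succ]
      simp only [Nat.add_one_ne_zero, if_false]
      push_cast
      ring
    · rw [coeffThree_succ_of_ne_one j (by norm_num), show 2 - 1 = 1 from rfl, coeffTwo_one_shift,
        h₁, re_ω_pow_succ, im_ω_pow_succ_div, pow_succ]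
      ring
    · rw [coeffThree_succ_of_ne_one j (by norm_num), show 3 - 1 = 2 from rfl, coeffTwo_two_shift,
        h₂, re_ω_pow_succ, im_ω_pow_succ_div, pow_succ]
      push_cast
      ring

lemma hasSum_re_ω_pow_mul_expTerm (x : ℝ) :
    HasSum (fun j => (ω ^ j).re * expTerm j x) (Real.exp (-x / 2) * Real.cos (√3 * x / 2)) := by
  convert Complex.hasSum_re (hasSum_pow_mul_expTerm ω x) using 1
  · funext j
    rw [Complex.re_mul_ofReal]
  · simp only [ω, Complex.exp_re, Complex.mul_re, Complex.mul_im, Complex.ofReal_re,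
      Complex.ofReal_im, mul_zero, sub_zero, zero_add]
    ring_nf

lemma hasSum_im_ω_pow_mul_expTerm (x : ℝ) :
    HasSum (fun j => (ω ^ j).im * expTerm j x) (Real.exp (-x / 2) * Real.sin (√3 * x / 2)) := by
  convert Complex.hasSum_im (hasSum_pow_mul_expTerm ω x) using 1
  · funext j
    rw [Complex.im_mul_ofReal]
  · simp only [ω, Complex.exp_im, Complex.mul_re, Complex.mul_im, Complex.ofReal_re,
      Complex.ofReal_im, mul_zero, sub_zero, zero_add]
    ring_nf

lemma P_three_one (x : ℝ) : P 3 1 x = 1 + (x - 1) * Real.exp (-x)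
    - 2 / √3 * Real.exp (-x / 2) * Real.sin (√3 * x / 2) := by
  rw [P_three_eq_tsum (by norm_num)]
  have hpoly := ((hasSum_natCast_mul_expTerm (-x)).add (hasSum_expTerm (-x))).neg.add
    (hasSum_ite_eq 0 1)
  have hosc := ((hasSum_im_ω_pow_mul_expTerm x).div_const √3).mul_left 2
  refine ((hpoly.sub hosc).congr_fun fun j => ?_).tsum_eq.trans ?_
  · rw [(coeffThree_eq j).1, expTerm_neg]
    obtain rfl | hj := eq_or_ne j 0
    · simp [expTerm]
    · simp only [hj, if_false]
      ring
  · ring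

lemma P_three_two (x : ℝ) : P 3 2 x = -Real.exp (-x) + Real.exp (-x / 2) *
    (1 / √3 * Real.sin (√3 * x / 2) + Real.cos (√3 * x / 2)) := by
  rw [P_three_eq_tsum (by norm_num)]
  have hosc :=
    (hasSum_re_ω_pow_mul_expTerm x).add ((hasSum_im_ω_pow_mul_expTerm x).div_const √3)
  refine (((hasSum_expTerm (-x)).neg.add hosc).congr_fun fun j => ?_).tsum_eq.trans ?_
  · rw [(coeffThree_eq j).2.1, expTerm_neg]
    ring
  · ring

lemma P_three_three (x : ℝ) : P 3 3 x = (2 - x) * Real.exp (-x) + Real.exp (-x / 2) *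
    (1 / √3 * Real.sin (√3 * x / 2) - Real.cos (√3 * x / 2)) := by
  rw [P_three_eq_tsum (by norm_num)]
  have hpoly := (hasSum_natCast_mul_expTerm (-x)).add ((hasSum_expTerm (-x)).mul_left 2)
  have hosc :=
    ((hasSum_im_ω_pow_mul_expTerm x).div_const √3).sub (hasSum_re_ω_pow_mul_expTerm x)
  refine ((hpoly.add hosc).congr_fun fun j => ?_).tsum_eq.trans ?_
  · rw [(coeffThree_eq j).2.2, expTerm_neg]
    ring
  · ring

/-- Explicit formulas for the winning probabilities in the 3-player game, and the value
`P_{3,1} = 1 − (2/√(3e))·sin(√3/2)`. -/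
theorem P_three_players :
    (∀ x ∈ Set.Icc (0:ℝ) 1,
      P 3 1 x = 1 + (x - 1) * Real.exp (-x)
          - 2 / Real.sqrt 3 * Real.exp (-x / 2) * Real.sin (Real.sqrt 3 * x / 2) ∧
      P 3 2 x = -Real.exp (-x) + Real.exp (-x / 2) *
          (1 / Real.sqrt 3 * Real.sin (Real.sqrt 3 * x / 2) + Real.cos (Real.sqrt 3 * x / 2)) ∧
      P 3 3 x = (2 - x) * Real.exp (-x) + Real.exp (-x / 2) *
          (1 / Real.sqrt 3 * Real.sin (Real.sqrt 3 * x / 2) - Real.cos (Real.sqrt 3 * x / 2))) ∧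
    P 3 1 1 = 1 - 2 / Real.sqrt (3 * Real.exp 1) * Real.sin (Real.sqrt 3 / 2) := by
  refine ⟨fun x _ => ⟨P_three_one x, P_three_two x, P_three_three x⟩, ?_⟩
  have hexp : Real.exp (-1 / 2) = (√(Real.exp 1))⁻¹ := by
    rw [← Real.exp_half, ← Real.exp_neg, neg_div]
  rw [P_three_one, Real.sqrt_mul (by norm_num), hexp]
  field_simp
  ring
end

section
/- For all integers n ≥ 0, p ≥ 1 and 1 ≤ k ≤ p, the number of permutations of {1,…,n} that encode a complete p-player dart game whose winner is player k equals n!·R_{n,p,k}(1). -/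
open MeasureTheory intervalIntegral

/-- Process a list of throw results (`true` = the thrower stays in the game and moves to
the back of the queue, `false` = the thrower is eliminated) on a queue of players. -/
def playGame : List Bool → List ℕ → List ℕ
  | [], q => q
  | _ :: bs, [] => playGame bs []
  | b :: bs, a :: q => playGame bs (if b then q ++ [a] else q)

/-- The list recording, for each position `i = 1, …, n`, whether position `i` is a
left-to-right minimum of the permutation `π` (i.e. `π i < π j` for all `j < i`). -/
def ltrMins {n : ℕ} (π : Equiv.Perm (Fin n)) : List Bool :=
  (List.finRange n).map fun i => decide (∀ j, j < i → π i < π j)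

/-- `π` encodes a complete `p`-player dart game whose winner is player `k`: starting from
the queue `[1, …, p]`, after all `n` throws exactly player `k` remains, and at least two
players remained before the last throw. -/
def EncodesWin (n p k : ℕ) (π : Equiv.Perm (Fin n)) : Prop :=
  playGame (ltrMins π) (List.range' 1 p) = [k] ∧
    (n = 0 ∨ 2 ≤ (playGame ((ltrMins π).take (n - 1)) (List.range' 1 p)).length)

/-!
Replace the initial record `+∞` of the left-to-right minima by a threshold `m`:
`ltrMinsBelow m π` marks the positions whose value is below `m` and below all earlier values, so
`ltrMins π = ltrMinsBelow n π`. Splitting off the first value `v` of `π`, the first thrower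
survives iff `v < m`, and then the threshold becomes `v`. Hence the number `winCount n m p k` of
permutations with threshold `m` that encode a complete game won by `k` satisfies a recursion
mirroring the one of `R`: in the Bernstein basis,
`n! · R_{n,p,k}(x) = ∑ₘ winCount n m p k · B_{n,m}(x)`, since
`∫₀ˣ B_{n,j} = (n+1)⁻¹ ∑_{m>j} B_{n+1,m}(x)` and `(n+1)(1-x) B_{n,m} = (n+1-m) B_{n+1,m}`.
At `x = 1` only `B_{n,n}` survives.
-/

theorem List.map_eq_singleton_iff_of_forall {α β : Type*} {f : α → β} {l : List α} {a : α}
    {b : β} (h : ∀ x ∈ l, f x = b ↔ x = a) : l.map f = [b] ↔ l = [a] := by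
  rw [List.map_eq_singleton_iff]
  constructor
  · rintro ⟨x, rfl, hx⟩
    rw [(h x (List.mem_singleton_self x)).mp hx]
  · rintro rfl
    exact ⟨a, rfl, (h a (List.mem_singleton_self a)).mpr rfl⟩

theorem Finset.sum_range_ite_lt {M : Type*} [AddCommMonoid M] {N m : ℕ} (hm : m ≤ N)
    (f : ℕ → M) (c : M) :
    ∑ j ∈ range N, (if j < m then f j else c) = ∑ j ∈ range m, f j + (N - m) • c := by
  rw [← sum_range_add_sum_Ico _ hm]
  congr 1
  · exact sum_congr rfl fun j hj => if_pos (mem_range.mp hj)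
  · rw [sum_congr rfl fun j hj => if_neg (by rw [mem_Ico] at hj; omega), sum_const,
      Nat.card_Ico]

namespace Darts

open Finset Polynomial

theorem playGame_map (f : ℕ → ℕ) : ∀ (bs : List Bool) (q : List ℕ),
    playGame bs (q.map f) = (playGame bs q).map f
  | [], _ => rfl
  | _ :: bs, [] => playGame_map f bs []
  | b :: bs, a :: q => by
    cases b
    · exact playGame_map f bs q
    · simpa [playGame] using playGame_map f bs (q ++ [a])

theorem length_playGame_le : ∀ (bs : List Bool) (q : List ℕ),
    (playGame bs q).length ≤ q.length
  | [], _ => le_rfl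
  | _ :: bs, [] => length_playGame_le bs []
  | b :: bs, a :: q => by
    cases b
    · exact (length_playGame_le bs q).trans (Nat.le_succ _)
    · simpa [playGame] using length_playGame_le bs (q ++ [a])

theorem playGame_subset : ∀ (bs : List Bool) (q : List ℕ), playGame bs q ⊆ q
  | [], _ => List.Subset.refl _
  | _ :: bs, [] => playGame_subset bs []
  | b :: bs, a :: q => by
    cases b
    · exact List.Subset.trans (playGame_subset bs q) (List.subset_cons_self a q)
    · refine List.Subset.trans (playGame_subset bs (q ++ [a])) ?_
      simp [List.subset_def, or_comm]

theorem playGame_true_cons_range' {p : ℕ} (hp : 1 ≤ p) (bs : List Bool) :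
    playGame (true :: bs) (List.range' 1 p)
      = (playGame bs (List.range' 1 p)).map (· % p + 1) := by
  obtain ⟨p, rfl⟩ := Nat.exists_eq_add_of_le' hp
  have hrot : List.range' 2 p ++ [1] = (List.range' 1 (p + 1)).map (· % (p + 1) + 1) := by
    rw [List.range'_concat, List.map_append]
    congr 1
    · rw [← List.map_add_range' 1 p 1]
      refine List.map_congr_left fun i hi => ?_
      rw [List.mem_range'_1] at hi
      rw [Nat.mod_eq_of_lt (by omega)]
      omega
    · simp [add_comm 1 p]
  rw [← playGame_map, ← hrot, List.range'_succ]
  rfl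

theorem playGame_false_cons_range' (p : ℕ) (bs : List Bool) :
    playGame (false :: bs) (List.range' 1 (p + 1))
      = (playGame bs (List.range' 1 p)).map (1 + ·) := by
  rw [List.range'_succ, ← playGame_map, List.map_add_range']
  rfl

theorem playGame_true_cons_range'_eq_singleton {p k : ℕ} (hp : 1 ≤ p) (hkp : k ≤ p)
    (bs : List Bool) :
    playGame (true :: bs) (List.range' 1 p) = [k]
      ↔ playGame bs (List.range' 1 p) = [if k = 1 then p else k - 1] := by
  rw [playGame_true_cons_range' hp]
  refine List.map_eq_singleton_iff_of_forall fun x hx => ?_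
  have hx := List.mem_range'_1.mp (playGame_subset _ _ hx)
  obtain hxp | rfl := Nat.lt_or_eq_of_le (Nat.le_of_lt_succ (by omega : x < p + 1))
  · rw [Nat.mod_eq_of_lt hxp]
    split_ifs <;> omega
  · rw [Nat.mod_self]
    split_ifs <;> omega

theorem playGame_false_cons_range'_eq_singleton (p k : ℕ) (bs : List Bool) :
    playGame (false :: bs) (List.range' 1 (p + 1)) = [k]
      ↔ playGame bs (List.range' 1 p) = [k - 1] := by
  rw [playGame_false_cons_range']
  refine List.map_eq_singleton_iff_of_forall fun x hx => ?_
  have := List.mem_range'_1.mp (playGame_subset _ _ hx)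
  omega

theorem length_playGame_cons_range' {p : ℕ} (hp : 1 ≤ p) (b : Bool) (bs : List Bool) :
    (playGame (b :: bs) (List.range' 1 p)).length
      = (playGame bs (List.range' 1 (if b then p else p - 1))).length := by
  obtain ⟨p, rfl⟩ := Nat.exists_eq_add_of_le' hp
  cases b
  · simp [playGame_false_cons_range']
  · simp [playGame_true_cons_range' hp]

theorem two_le_length_playGame_dropLast_cons {p : ℕ} (hp : 2 ≤ p) (b : Bool) (bs : List Bool) :
    2 ≤ (playGame (b :: bs).dropLast (List.range' 1 p)).length
      ↔ bs = [] ∨ 2 ≤ (playGame bs.dropLast (List.range' 1 (if b then p else p - 1))).length := by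
  cases bs with
  | nil => simpa [playGame] using hp
  | cons b' bs =>
    rw [List.dropLast_cons_cons, length_playGame_cons_range' (by omega)]
    simp

def CompleteWin (p k : ℕ) (bs : List Bool) : Prop :=
  playGame bs (List.range' 1 p) = [k] ∧
    (bs = [] ∨ 2 ≤ (playGame bs.dropLast (List.range' 1 p)).length)

theorem encodesWin_iff_completeWin {n p k : ℕ} (π : Equiv.Perm (Fin n)) :
    EncodesWin n p k π ↔ CompleteWin p k (ltrMins π) := by
  have hlen : (ltrMins π).length = n := by simp [ltrMins]
  simp only [EncodesWin, CompleteWin, List.dropLast_eq_take, hlen, ← List.length_eq_zero_iff]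

theorem completeWin_nil_iff (p k : ℕ) : CompleteWin p k [] ↔ p = 1 ∧ k = 1 := by
  simp only [CompleteWin, playGame, true_or, and_true]
  constructor
  · intro h
    obtain rfl : p = 1 := by simpa using congrArg List.length h
    simpa [eq_comm] using h
  · rintro ⟨rfl, rfl⟩
    rfl

theorem not_completeWin_cons_of_le_one {p : ℕ} (hp : p ≤ 1) (k : ℕ) (b : Bool) (bs : List Bool) :
    ¬ CompleteWin p k (b :: bs) := by
  rintro ⟨-, h | h⟩
  · exact List.cons_ne_nil b bs h
  · have := length_playGame_le (b :: bs).dropLast (List.range' 1 p)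
    simp only [List.length_range'] at this
    omega

theorem completeWin_true_cons_iff {p k : ℕ} (hp : 2 ≤ p) (hkp : k ≤ p) (bs : List Bool) :
    CompleteWin p k (true :: bs) ↔ CompleteWin p (if k = 1 then p else k - 1) bs := by
  simp only [CompleteWin, playGame_true_cons_range'_eq_singleton (by omega) hkp,
    two_le_length_playGame_dropLast_cons hp, List.cons_ne_nil, false_or, if_true]

theorem completeWin_false_cons_iff {p : ℕ} (hp : 2 ≤ p) (k : ℕ) (bs : List Bool) :
    CompleteWin p k (false :: bs) ↔ CompleteWin (p - 1) (k - 1) bs := by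
  obtain ⟨p, rfl⟩ := Nat.exists_eq_add_of_le' (by omega : 1 ≤ p)
  simp only [CompleteWin, playGame_false_cons_range'_eq_singleton,
    two_le_length_playGame_dropLast_cons hp, List.cons_ne_nil, false_or, Bool.false_eq_true,
    if_false, Nat.add_sub_cancel]

noncomputable def consPerm {n : ℕ} (v : Fin (n + 1)) (τ : Equiv.Perm (Fin n)) :
    Equiv.Perm (Fin (n + 1)) :=
  Equiv.ofBijective (Fin.cons v (v.succAbove ∘ τ)) <| Finite.injective_iff_bijective.mp <|
    Fin.cons_injective_iff.mpr
      ⟨fun ⟨i, hi⟩ => Fin.succAbove_ne v (τ i) hi, Fin.succAbove_right_injective.comp τ.injective⟩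

@[simp] theorem consPerm_zero {n : ℕ} (v : Fin (n + 1)) (τ : Equiv.Perm (Fin n)) :
    consPerm v τ 0 = v := rfl

@[simp] theorem consPerm_succ {n : ℕ} (v : Fin (n + 1)) (τ : Equiv.Perm (Fin n)) (i : Fin n) :
    consPerm v τ i.succ = v.succAbove (τ i) := rfl

theorem consPerm_injective2 {n : ℕ} : Function.Injective2 (consPerm (n := n)) := by
  intro v w τ σ h
  obtain rfl : v = w := by simpa using DFunLike.congr_fun h 0
  refine ⟨rfl, Equiv.ext fun i => (Fin.succAbove_right_injective (p := v)) ?_⟩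
  simpa using DFunLike.congr_fun h i.succ

noncomputable def consPermEquiv (n : ℕ) :
    Fin (n + 1) × Equiv.Perm (Fin n) ≃ Equiv.Perm (Fin (n + 1)) :=
  Equiv.ofBijective (fun x => consPerm x.1 x.2) <| by
    rw [Fintype.bijective_iff_injective_and_card]
    refine ⟨fun x y h => Prod.ext_iff.mpr (consPerm_injective2 h), ?_⟩
    simp [Fintype.card_perm, Nat.factorial_succ]

theorem ncard_perm_eq_sum_consPerm {n : ℕ} (P : Equiv.Perm (Fin (n + 1)) → Prop) :
    {π | P π}.ncard = ∑ v : Fin (n + 1), {τ | P (consPerm v τ)}.ncard := by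
  simp_rw [← Nat.card_coe_set_eq, ← Nat.card_sigma]
  exact Nat.card_congr <| ((consPermEquiv n).subtypeEquiv fun _ => Iff.rfl).symm.trans
    (Equiv.subtypeProdEquivSigmaSubtype fun v τ => P (consPerm v τ))

def ltrMinsBelow {n : ℕ} (m : ℕ) (π : Equiv.Perm (Fin n)) : List Bool :=
  (List.finRange n).map fun i => decide ((π i : ℕ) < m ∧ ∀ j, j < i → π i < π j)

theorem ltrMins_eq_ltrMinsBelow {n : ℕ} (π : Equiv.Perm (Fin n)) :
    ltrMins π = ltrMinsBelow n π := by
  simp [ltrMins, ltrMinsBelow]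

theorem val_succAbove_lt_and_succAbove_lt_iff {n : ℕ} (v : Fin (n + 1)) (a : Fin n) (m : ℕ) :
    (v.succAbove a : ℕ) < m ∧ v.succAbove a < v ↔ (a : ℕ) < min (v : ℕ) m := by
  rw [Fin.succAbove_lt_iff_castSucc_lt, lt_min_iff, Fin.lt_def, Fin.val_castSucc]
  by_cases h : (a : ℕ) < v
  · rw [Fin.succAbove_of_castSucc_lt v a (Fin.lt_def.mpr h), Fin.val_castSucc]
    tauto
  · simp [h]

theorem ltrMinsBelow_consPerm {n : ℕ} (m : ℕ) (v : Fin (n + 1)) (τ : Equiv.Perm (Fin n)) :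
    ltrMinsBelow m (consPerm v τ) = decide ((v : ℕ) < m) :: ltrMinsBelow (min v m) τ := by
  simp only [ltrMinsBelow, List.finRange_succ, List.map_cons, List.map_map]
  congr 1
  · simp
  · refine List.map_congr_left fun i _ => decide_eq_decide.mpr ?_
    simp only [consPerm_succ, Fin.forall_fin_succ, consPerm_zero, Fin.succ_pos,
      Fin.succ_lt_succ_iff, Fin.succAbove_lt_succAbove_iff, forall_const]
    rw [← and_assoc, val_succAbove_lt_and_succAbove_lt_iff]

def winCount : ℕ → ℕ → ℕ → ℕ → ℕ
  | 0, _, p, k => if p = 1 ∧ k = 1 then 1 else 0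
  | n + 1, m, p, k =>
      if p ≤ 1 then 0
      else if k = 1 then ∑ j ∈ range m, winCount n j p p
      else (n + 1 - m) * winCount n m (p - 1) (k - 1) + ∑ j ∈ range m, winCount n j p (k - 1)

theorem winCount_zero_right (n m p : ℕ) : winCount n m p 0 = 0 := by
  induction n generalizing m p with
  | zero => simp [winCount]
  | succ n ih => simp [winCount, ih]

theorem winCount_succ {n p : ℕ} (hp : 2 ≤ p) (m k : ℕ) :
    winCount (n + 1) m p k = ∑ j ∈ range m, winCount n j p (if k = 1 then p else k - 1)
      + (n + 1 - m) * winCount n m (p - 1) (k - 1) := by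
  rw [winCount, if_neg (by omega)]
  split_ifs with hk
  · simp [hk, winCount_zero_right]
  · rw [add_comm]

theorem ncard_completeWin_ltrMinsBelow {n m p k : ℕ} (hm : m ≤ n) (hkp : k ≤ p) :
    {π : Equiv.Perm (Fin n) | CompleteWin p k (ltrMinsBelow m π)}.ncard = winCount n m p k := by
  induction n generalizing m p k with
  | zero =>
    have hnil (π : Equiv.Perm (Fin 0)) : ltrMinsBelow m π = [] := by simp [ltrMinsBelow]
    simp only [hnil, completeWin_nil_iff, winCount]
    split_ifs with h
    · simp [h, Set.ncard_univ]
    · simp [h]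
  | succ n ih =>
    simp only [ncard_perm_eq_sum_consPerm, ltrMinsBelow_consPerm]
    by_cases hp : p ≤ 1
    · simp [not_completeWin_cons_of_le_one hp, winCount, hp]
    have hcount (v : Fin (n + 1)) :
        {τ : Equiv.Perm (Fin n) |
            CompleteWin p k (decide ((v : ℕ) < m) :: ltrMinsBelow (min v m) τ)}.ncard
          = if (v : ℕ) < m then winCount n v p (if k = 1 then p else k - 1)
            else winCount n m (p - 1) (k - 1) := by
      by_cases hv : (v : ℕ) < m
      · simp only [hv, if_true, decide_true, completeWin_true_cons_iff (by omega) hkp,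
          min_eq_left hv.le]
        exact ih (by omega) (by split_ifs <;> omega)
      · simp only [hv, if_false, decide_false, completeWin_false_cons_iff (p := p) (by omega),
          min_eq_right (not_lt.mp hv)]
        exact ih (by omega) (by omega : k - 1 ≤ p - 1)
    rw [Fintype.sum_congr _ _ hcount, Fin.sum_univ_eq_sum_range
      (fun j => if j < m then winCount n j p (if k = 1 then p else k - 1)
        else winCount n m (p - 1) (k - 1)), sum_range_ite_lt hm, smul_eq_mul,
      winCount_succ (by omega)]

theorem derivative_sum_range_bernsteinPolynomial (R : Type*) [CommRing R] (n j : ℕ) :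
    derivative (∑ m ∈ range (j + 1), bernsteinPolynomial R (n + 1) m)
      = -((n + 1 : R[X]) * bernsteinPolynomial R n j) := by
  induction j with
  | zero =>
    simp [bernsteinPolynomial.derivative_zero]
    ring
  | succ j ih =>
    rw [sum_range_succ, derivative_add, ih, bernsteinPolynomial.derivative_succ]
    push_cast
    ring

theorem derivative_sum_Ico_bernsteinPolynomial (R : Type*) [CommRing R] {n j : ℕ}
    (hj : j ≤ n + 1) :
    derivative (∑ m ∈ Ico (j + 1) (n + 2), bernsteinPolynomial R (n + 1) m)
      = (n + 1 : R[X]) * bernsteinPolynomial R n j := by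
  rw [sum_Ico_eq_sub _ (by omega), bernsteinPolynomial.sum R (n + 1), derivative_sub,
    derivative_one, derivative_sum_range_bernsteinPolynomial, zero_sub, neg_neg]

theorem integral_eval_of_derivative_eq {p q : ℝ[X]} (h : derivative q = p) (a b : ℝ) :
    ∫ v in a..b, p.eval v = q.eval b - q.eval a :=
  intervalIntegral.integral_eq_sub_of_hasDerivAt (fun v _ => h ▸ q.hasDerivAt v)
    (p.continuous.intervalIntegrable a b)

theorem integral_bernsteinPolynomial {n j : ℕ} (hj : j ≤ n + 1) (x : ℝ) :
    ∫ v in (0 : ℝ)..x, (bernsteinPolynomial ℝ n j).eval v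
      = (n + 1 : ℝ)⁻¹ * ∑ m ∈ Ico (j + 1) (n + 2), (bernsteinPolynomial ℝ (n + 1) m).eval x := by
  have hder : derivative (C (n + 1 : ℝ)⁻¹ * ∑ m ∈ Ico (j + 1) (n + 2),
      bernsteinPolynomial ℝ (n + 1) m) = bernsteinPolynomial ℝ n j := by
    rw [derivative_C_mul, derivative_sum_Ico_bernsteinPolynomial ℝ hj, ← mul_assoc,
      show (n + 1 : ℝ[X]) = C (n + 1 : ℝ) by simp, ← C_mul, inv_mul_cancel₀ (by positivity),
      C_1, one_mul]
  rw [integral_eval_of_derivative_eq hder]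
  simp +contextual [eval_finsetSum, bernsteinPolynomial.eval_at_0, Nat.pos_iff_ne_zero]

theorem integral_sum_mul_bernsteinPolynomial (n : ℕ) (a : ℕ → ℝ) (x : ℝ) :
    ∫ v in (0 : ℝ)..x, ∑ j ∈ range (n + 1), a j * (bernsteinPolynomial ℝ n j).eval v
      = (n + 1 : ℝ)⁻¹ * ∑ l ∈ range (n + 2),
          (∑ j ∈ range l, a j) * (bernsteinPolynomial ℝ (n + 1) l).eval x := by
  rw [intervalIntegral.integral_finsetSum fun j _ =>
    ((bernsteinPolynomial ℝ n j).continuous.const_mul (a j)).intervalIntegrable _ _]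
  simp_rw [intervalIntegral.integral_const_mul]
  rw [sum_congr rfl fun j hj => by
    rw [integral_bernsteinPolynomial (mem_range.mp hj).le]]
  simp_rw [mul_left_comm (a _), ← mul_sum, sum_mul]
  congr 1
  simp_rw [mul_sum]
  exact sum_comm' fun j l => by simp only [mem_range, mem_Ico]; omega

theorem natCast_mul_one_sub_mul_bernsteinPolynomial (R : Type*) [CommRing R] {n m : ℕ}
    (hm : m ≤ n) :
    (n + 1 : R[X]) * ((1 - X) * bernsteinPolynomial R n m)
      = ((n + 1 - m : ℕ) : R[X]) * bernsteinPolynomial R (n + 1) m := by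
  have hchoose : ((n.choose m * (n + 1) : ℕ) : R[X]) = ((n + 1).choose m * (n + 1 - m) : ℕ) :=
    congrArg _ (Nat.choose_mul_succ_eq n m)
  simp only [bernsteinPolynomial, show n + 1 - m = n - m + 1 by omega, pow_succ]
  push_cast [Nat.cast_sub hm, Nat.cast_sub (Nat.le_succ_of_le hm)] at hchoose ⊢
  linear_combination (X ^ m * (1 - X) ^ (n - m) * (1 - X)) * hchoose

theorem one_sub_mul_sum_mul_bernsteinPolynomial (n : ℕ) (a : ℕ → ℝ) (x : ℝ) :
    (1 - x) * ∑ m ∈ range (n + 1), a m * (bernsteinPolynomial ℝ n m).eval x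
      = (n + 1 : ℝ)⁻¹ * ∑ l ∈ range (n + 2),
          (n + 1 - l : ℕ) * a l * (bernsteinPolynomial ℝ (n + 1) l).eval x := by
  rw [sum_range_succ _ (n + 1), Nat.sub_self, Nat.cast_zero, zero_mul, zero_mul, add_zero,
    eq_inv_mul_iff_mul_eq₀ (by positivity), mul_sum, mul_sum]
  refine sum_congr rfl fun m hm => ?_
  have := congrArg (eval x)
    (natCast_mul_one_sub_mul_bernsteinPolynomial ℝ (Nat.lt_succ_iff.mp (mem_range.mp hm)))
  simp only [eval_mul, eval_add, eval_natCast, eval_one, eval_sub, eval_X] at this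
  linear_combination a m * this

theorem R_zero_right (n p : ℕ) (x : ℝ) : R n p 0 x = 0 := by
  induction n generalizing p x with
  | zero => simp [R]
  | succ n ih => simp [R, ih]

theorem R_succ {n p : ℕ} (hp : 2 ≤ p) (k : ℕ) (x : ℝ) :
    R (n + 1) p k x = (1 - x) * R n (p - 1) (k - 1) x
      + ∫ v in (0 : ℝ)..x, R n p (if k = 1 then p else k - 1) v := by
  rw [R, if_neg (by omega)]
  split_ifs with hk
  · simp [hk, R_zero_right]
  · rfl

theorem R_eq_sum_winCount_mul_bernsteinPolynomial (n p k : ℕ) (x : ℝ) :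
    R n p k x = (n.factorial : ℝ)⁻¹
      * ∑ m ∈ range (n + 1), (winCount n m p k : ℝ) * (bernsteinPolynomial ℝ n m).eval x := by
  induction n generalizing p k x with
  | zero => simp [R, winCount, bernsteinPolynomial]
  | succ n ih =>
    by_cases hp : p ≤ 1
    · simp [R, winCount, hp]
    simp_rw [R_succ (by omega : 2 ≤ p), ih, intervalIntegral.integral_const_mul,
      integral_sum_mul_bernsteinPolynomial, ← mul_assoc, mul_comm (1 - x), mul_assoc,
      one_sub_mul_sum_mul_bernsteinPolynomial, winCount_succ (by omega : 2 ≤ p)]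
    push_cast
    rw [Nat.factorial_succ, Nat.cast_mul, mul_inv, Nat.cast_succ]
    simp only [add_mul, sum_add_distrib]
    ring

end Darts

theorem card_encodesWin_general (n p k : ℕ) (hkp : k ≤ p) :
    ({π : Equiv.Perm (Fin n) | EncodesWin n p k π}.ncard : ℝ)
      = (Nat.factorial n : ℝ) * R n p k 1 := by
  simp only [Darts.encodesWin_iff_completeWin, Darts.ltrMins_eq_ltrMinsBelow,
    Darts.ncard_completeWin_ltrMinsBelow le_rfl hkp,
    Darts.R_eq_sum_winCount_mul_bernsteinPolynomial, bernsteinPolynomial.eval_at_1]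
  simp [Nat.factorial_ne_zero]

/-- The number of permutations of `{1, …, n}` encoding a complete `p`-player dart game
won by player `k` equals `n!·R_{n,p,k}(1)`. -/
theorem card_encodesWin (n p k : ℕ) (hp : 1 ≤ p) (hk1 : 1 ≤ k) (hkp : k ≤ p) :
    ({π : Equiv.Perm (Fin n) | EncodesWin n p k π}.ncard : ℝ)
      = (Nat.factorial n : ℝ) * R n p k 1 :=
  card_encodesWin_general n p k hkp
end
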